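/- arXiv:1211.6638 — 3 statements merged into one kernel-verified Lean document; each statement's English description precedes it below -/
import Mathlib

section
/- Let p be an odd prime, n a natural number, and x ∈ ℚ_p. Then the sequence N ↦ Σ_{y=0}^{p^N−1} (−1)^y (x+y)^n converges in ℚ_p to Σ_{k=0}^{n} (n choose k) E_k x^{n−k}, i.e., to the value E_n(x) of the n-th Euler polynomial at x; that is, ∫_{ℤ_p} (x+y)^n dμ_{−1}(y) = E_n(x). -/
open Filter Finset Topology

/-! The Euler polynomials form the Appell sequence of the Euler numbers, so
`E_n(z + 1) = ∑ C(n,j) E_j(1) z^(n-j)`, and the recurrence says `E_j(1) = -E_j` for `j ≥ 1`;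
hence `E_n(z + 1) + E_n(z) = 2 z^n`. Summing this against `(-1)^y` telescopes:
`2 ∑_{y<M} (-1)^y (x+y)^n = E_n(x) + E_n(x + M)` for odd `M`. With `M = p^N → 0` in `ℚ_p`,
continuity of `E_n` gives the limit `E_n(x)`. -/

section Appell

variable {R : Type*} [CommSemiring R]

/-- The `n`-th Appell polynomial of the sequence `a`; for the Euler numbers it is `E_n(z)`. -/
def appell (a : ℕ → R) (n : ℕ) (z : R) : R :=
  ∑ k ∈ range (n + 1), (n.choose k : R) * a k * z ^ (n - k)

theorem appell_add (a : ℕ → R) (n : ℕ) (z w : R) :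
    appell a n (z + w) = appell (fun j => appell a j w) n z := by
  -- both sides are sums over `k ≤ j ≤ n`, matched by `C(n,j) C(j,k) = C(n,k) C(n-k,j-k)`
  symm
  calc appell (fun j => appell a j w) n z
      = ∑ j ∈ range (n + 1), ∑ k ∈ range (j + 1),
          (n.choose k : R) * a k * ((n - k).choose (j - k) * w ^ (j - k) * z ^ (n - j)) := by
        rw [appell]
        refine sum_congr rfl fun j _ => ?_
        rw [appell, mul_sum, sum_mul]
        refine sum_congr rfl fun k hk => ?_
        have hkj : k ≤ j := Nat.lt_succ_iff.mp (mem_range.mp hk)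
        trans ((n.choose j * j.choose k : ℕ) : R) * (a k * w ^ (j - k) * z ^ (n - j))
        · push_cast; ring
        · rw [Nat.choose_mul hkj]; push_cast; ring
    _ = ∑ k ∈ range (n + 1), ∑ j ∈ Ico k (n + 1),
          (n.choose k : R) * a k * ((n - k).choose (j - k) * w ^ (j - k) * z ^ (n - j)) :=
        sum_comm' fun j k => by simp only [mem_range, mem_Ico]; omega
    _ = appell a n (z + w) := by
        refine sum_congr rfl fun k hk => ?_
        have hk : k ≤ n := Nat.lt_succ_iff.mp (mem_range.mp hk)
        rw [← mul_sum, add_comm z w, add_pow, sum_Ico_eq_sum_range]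
        refine congrArg _ (sum_congr (by congr 1; omega) fun i _ => ?_)
        rw [Nat.add_sub_cancel_left, ← Nat.sub_sub]
        ring

theorem appell_ite_zero (c : R) (n : ℕ) (z : R) :
    appell (fun k => if k = 0 then c else 0) n z = c * z ^ n := by
  rw [appell, sum_eq_single 0 (fun k _ hk => by simp [hk]) (by simp)]
  simp

theorem continuous_appell [TopologicalSpace R] [IsTopologicalSemiring R] (a : ℕ → R) (n : ℕ) :
    Continuous (appell a n) := by
  unfold appell
  fun_prop

end Appell

section CommRing

variable {R : Type*} [CommRing R]

theorem appell_sub (a b : ℕ → R) (n : ℕ) (z : R) :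
    appell (fun k => a k - b k) n z = appell a n z - appell b n z := by
  simp only [appell, mul_sub, sub_mul, sum_sub_distrib]

theorem sum_range_neg_one_pow_mul_succ_add (F : ℕ → R) (M : ℕ) :
    ∑ y ∈ range M, (-1 : R) ^ y * (F (y + 1) + F y) = F 0 - (-1) ^ M * F M := by
  induction M with
  | zero => simp
  | succ M ih => rw [sum_range_succ, ih, pow_succ]; ring

end CommRing

section Euler

variable {K : Type*} [Field K] [CharZero K] {E : ℕ → ℚ}

theorem appell_euler_one (hE0 : E 0 = 1)
    (hE : ∀ n : ℕ, 1 ≤ n → (∑ k ∈ range (n + 1), (n.choose k : ℚ) * E k) + E n = 0) (j : ℕ) :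
    appell (fun k => (E k : K)) j 1 = (if j = 0 then 2 else 0) - E j := by
  rcases Nat.eq_zero_or_pos j with rfl | hj
  · simp [appell, hE0]
    norm_num
  · have := congrArg (Rat.cast : ℚ → K) (hE j hj)
    push_cast at this
    simp only [appell, one_pow, mul_one, hj.ne', if_false]
    linear_combination this

theorem appell_euler_add_one_add (hE0 : E 0 = 1)
    (hE : ∀ n : ℕ, 1 ≤ n → (∑ k ∈ range (n + 1), (n.choose k : ℚ) * E k) + E n = 0)
    (n : ℕ) (z : K) :
    appell (fun k => (E k : K)) n (z + 1) + appell (fun k => (E k : K)) n z = 2 * z ^ n := by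
  simp only [appell_add, appell_euler_one hE0 hE, appell_sub, appell_ite_zero]
  ring

theorem tendsto_sum_neg_one_pow_mul_add_pow [TopologicalSpace K] [IsTopologicalSemiring K]
    (hE0 : E 0 = 1)
    (hE : ∀ n : ℕ, 1 ≤ n → (∑ k ∈ range (n + 1), (n.choose k : ℚ) * E k) + E n = 0)
    (n : ℕ) (x : K) {M : ℕ → ℕ} (hM : ∀ N, Odd (M N))
    (hM0 : Tendsto (fun N => (M N : K)) atTop (𝓝 0)) :
    Tendsto (fun N => ∑ y ∈ range (M N), (-1 : K) ^ y * (x + y) ^ n) atTop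
      (𝓝 (appell (fun k => (E k : K)) n x)) := by
  set P := appell (fun k => (E k : K)) n
  have hP1 (z : K) : P (z + 1) + P z = 2 * z ^ n := appell_euler_add_one_add hE0 hE n z
  have hsum (N : ℕ) : ∑ y ∈ range (M N), (-1 : K) ^ y * (x + y) ^ n
      = 2⁻¹ * (P x + P (x + M N)) := by
    have h := sum_range_neg_one_pow_mul_succ_add (fun y => P (x + y)) (M N)
    simp only [Nat.cast_succ, ← add_assoc, hP1, (hM N).neg_one_pow, Nat.cast_zero, add_zero] at h
    rw [eq_inv_mul_iff_mul_eq₀ two_ne_zero, mul_sum]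
    simp only [mul_left_comm (2 : K)] at h ⊢
    rw [h]
    ring
  have hshift : Tendsto (fun N => P (x + M N)) atTop (𝓝 (P x)) := by
    have hx := (tendsto_const_nhds (x := x)).add hM0
    rw [add_zero] at hx
    exact ((continuous_appell _ n).tendsto x).comp hx
  have hP : 2⁻¹ * (P x + P x) = P x := by rw [← two_mul, inv_mul_cancel_left₀ two_ne_zero]
  have hlim := ((tendsto_const_nhds (x := P x)).add hshift).const_mul (2⁻¹ : K)
  rw [hP] at hlim
  exact hlim.congr fun N => (hsum N).symm

end Euler

/-- Let `E : ℕ → ℚ` be the Euler numbers, defined by `E 0 = 1` and, for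
`n ≥ 1`, `∑_{k=0}^{n} (n choose k) E k + E n = 0`. For an odd prime `p`, `n : ℕ` and
`x ∈ ℚ_[p]`, the sequence `N ↦ ∑_{y=0}^{p^N - 1} (-1)^y (x+y)^n` converges in `ℚ_[p]` to
`E_n(x) = ∑_{k=0}^{n} (n choose k) E_k x^{n-k}`, i.e. `∫_{ℤ_p} (x+y)^n dμ₋₁(y) = E_n(x)`. -/
theorem fermionic_integral_shifted_monomial_eq_eulerPolynomial (p : ℕ) [Fact p.Prime]
    (hp : Odd p) (E : ℕ → ℚ) (hE0 : E 0 = 1)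
    (hE : ∀ n : ℕ, 1 ≤ n → (∑ k ∈ Finset.range (n + 1), (n.choose k : ℚ) * E k) + E n = 0)
    (n : ℕ) (x : ℚ_[p]) :
    Tendsto (fun N : ℕ => ∑ y ∈ Finset.range (p ^ N), (-1 : ℚ_[p]) ^ y * (x + (y : ℚ_[p])) ^ n)
      atTop
      (nhds (∑ k ∈ Finset.range (n + 1), (n.choose k : ℚ_[p]) * (E k : ℚ_[p]) * x ^ (n - k))) := by
  have hp0 : Tendsto (fun N => ((p ^ N : ℕ) : ℚ_[p])) atTop (𝓝 0) := by
    simpa using tendsto_pow_atTop_nhds_zero_of_norm_lt_one (Padic.norm_p_lt_one (p := p))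
  exact tendsto_sum_neg_one_pow_mul_add_pow hE0 hE n x (fun _ => hp.pow) hp0
end

section
/- Let p be an odd prime, and for each natural number n let L_n ∈ ℚ_p be the limit of the sequence N ↦ Σ_{x=0}^{p^N−1} (−1)^x x^n (assumed to exist). Then L_0 = 1, and for every n ≥ 1 one has Σ_{k=0}^{n} (n choose k) L_k + L_n = 0; that is, the fermionic p-adic integrals of the monomials satisfy the Euler number recurrence (E+1)^n + E_n = 2δ_{0,n}. -/
open Filter Finset

/-!
Writing `S_M(k) = ∑_{x<M} (-1)^x x^k`, the binomial theorem turns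
`∑_k C(n,k) S_M(k) + S_M(n)` into the telescoping sum
`∑_{x<M} ((-1)^x x^n - (-1)^(x+1) (x+1)^n) = 0^n - (-1)^M M^n`.
For `M = p^N` odd and `n ≥ 1` this is `p^(N n)`, which tends to `0` in `ℚ_p`;
for `n = 0`, `S_M(0) = 1` since `M` is odd.
-/

section AlternatingPowerSum

variable (R : Type*) [CommRing R]

def alternatingPowerSum (M k : ℕ) : R :=
  ∑ x ∈ range M, (-1 : R) ^ x * (x : R) ^ k

theorem alternatingPowerSum_zero_of_odd {M : ℕ} (hM : Odd M) :
    alternatingPowerSum R M 0 = 1 := by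
  simp only [alternatingPowerSum, pow_zero, mul_one, neg_one_geom_sum,
    if_neg (Nat.not_even_iff_odd.mpr hM)]

theorem sum_choose_mul_alternatingPowerSum (M n : ℕ) :
    ∑ k ∈ range (n + 1), (n.choose k : R) * alternatingPowerSum R M k =
      ∑ x ∈ range M, (-1 : R) ^ x * ((x : R) + 1) ^ n := by
  simp only [alternatingPowerSum, mul_sum, add_pow, one_pow, mul_one]
  rw [sum_comm]
  exact sum_congr rfl fun x _ => sum_congr rfl fun k _ => by ring

theorem sum_choose_mul_alternatingPowerSum_add_self (M n : ℕ) :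
    ∑ k ∈ range (n + 1), (n.choose k : R) * alternatingPowerSum R M k +
      alternatingPowerSum R M n = 0 ^ n - (-1) ^ M * (M : R) ^ n := by
  set f : ℕ → R := fun x => (-1) ^ x * (x : R) ^ n
  calc _ = ∑ x ∈ range M, (f x - f (x + 1)) := by
        rw [sum_choose_mul_alternatingPowerSum, alternatingPowerSum, ← sum_add_distrib]
        refine sum_congr rfl fun x _ => ?_
        simp only [f, pow_succ, Nat.cast_succ]
        ring
    _ = f 0 - f M := sum_range_sub' f M
    _ = _ := by simp [f]

end AlternatingPowerSum

theorem tendsto_natCast_prime_pow_pow_nhds_zero (p : ℕ) [Fact p.Prime] {n : ℕ} (hn : n ≠ 0) :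
    Tendsto (fun N : ℕ => ((p ^ N : ℕ) : ℚ_[p]) ^ n) atTop (nhds 0) := by
  have h := ((continuous_pow n).tendsto 0).comp
    (tendsto_pow_atTop_nhds_zero_of_norm_lt_one (Padic.norm_p_lt_one (p := p)))
  simpa [Function.comp_def, zero_pow hn] using h

/-- For an odd prime `p`, suppose that for each `n : ℕ` the sequence
`N ↦ ∑_{x=0}^{p^N - 1} (-1)^x x^n` converges in `ℚ_[p]` to `L n`. Then `L 0 = 1` and for
every `n ≥ 1` one has `∑_{k=0}^{n} (n choose k) L k + L n = 0`; i.e. the fermionic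
`p`-adic integrals of the monomials satisfy the Euler number recurrence
`(E+1)^n + E_n = 2 δ_{0,n}`. -/
theorem fermionic_integrals_satisfy_euler_recurrence (p : ℕ) [Fact p.Prime] (hp : Odd p)
    (L : ℕ → ℚ_[p])
    (hL : ∀ n : ℕ, Tendsto
      (fun N : ℕ => ∑ x ∈ Finset.range (p ^ N), (-1 : ℚ_[p]) ^ x * (x : ℚ_[p]) ^ n)
      atTop (nhds (L n))) :
    L 0 = 1 ∧ ∀ n : ℕ, 1 ≤ n →
      (∑ k ∈ Finset.range (n + 1), (n.choose k : ℚ_[p]) * L k) + L n = 0 := by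
  have hS : ∀ n, Tendsto (fun N => alternatingPowerSum ℚ_[p] (p ^ N) n) atTop (nhds (L n)) := hL
  refine ⟨tendsto_nhds_unique (hS 0) ?_, fun n hn => tendsto_nhds_unique ?_
    (tendsto_natCast_prime_pow_pow_nhds_zero p (n := n) (by omega))⟩
  · simpa only [alternatingPowerSum_zero_of_odd _ hp.pow] using tendsto_const_nhds
  · have hsum := (tendsto_finsetSum (range (n + 1)) fun k _ =>
      (hS k).const_mul (n.choose k : ℚ_[p])).add (hS n)
    refine hsum.congr fun N => ?_
    rw [sum_choose_mul_alternatingPowerSum_add_self, zero_pow (by omega), hp.pow.neg_one_pow]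
    ring
end

section
/- Let p be an odd prime, n and r ≥ 1 natural numbers, and suppose f_0, f_1, …, f_r : ℚ_p → ℚ_p are functions such that f_0(x) = x^n for all x, and for each j < r and each x ∈ ℚ_p the sequence N ↦ Σ_{u=0}^{p^N−1} (−1)^u f_j(x+u) converges in ℚ_p to f_{j+1}(x). Then f_r(0) = Σ (n!/(i_1!⋯i_r!)) E_{i_1}⋯E_{i_r}, the sum over all r-tuples (i_1,…,i_r) of natural numbers with i_1+⋯+i_r = n, and the Euler numbers E_k viewed in ℚ_p via the canonical map; that is, the r-fold iterated fermionic p-adic integral ∫_{ℤ_p}⋯∫_{ℤ_p} (x_1+⋯+x_r)^n dμ_{−1}(x_1)⋯dμ_{−1}(x_r) equals the n-th Euler number of order r, E_n^{(r)} = Σ_{i_1+⋯+i_r=n} (n choose i_1,…,i_r) E_{i_1}⋯E_{i_r}. -/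
/-!
With `S_N(g) = ∑_{u < p^N} (-1)^u g(u)`, the sum of `(-1)^u ((u+1)^m + u^m)` over the odd range
`u < p^N` telescopes to `p^{Nm}`; expanding `(u+1)^m` gives
`2 S_N(x^m) + ∑_{k<m} (m choose k) S_N(x^k) = p^{Nm} → 0`, so by induction on `m` the moments
`S_N(x^m)` tend to the solution `E_m` of the Euler recurrence. Expanding `(x+y)^k` binomially, the
fermionic integral in `y` of the Euler polynomial `E_n^{(j)}(x+y)` of order `j` is the Euler
polynomial of order `j+1`; since `E_n^{(0)}(x) = x^n`, `f j x = E_n^{(j)}(x)`, whose value at `0`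
is the multinomial sum `E_n^{(r)}`.
-/

open Filter Finset Topology

theorem Nat.multinomial_univ_fin_cons {k : ℕ} (a : ℕ) (t : Fin k → ℕ) :
    Nat.multinomial univ (Fin.cons a t : Fin (k + 1) → ℕ) =
      (a + ∑ i, t i).choose a * Nat.multinomial univ t := by
  rw [Fin.univ_succ, Nat.multinomial_cons, Fin.cons_zero, sum_map]
  simp [Nat.multinomial, prod_map, sum_map]

namespace Finset.Nat

theorem sum_antidiagonalTuple_succ {M : Type*} [AddCommMonoid M] (k n : ℕ)
    (g : (Fin (k + 1) → ℕ) → M) :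
    ∑ x ∈ antidiagonalTuple (k + 1) n, g x =
      ∑ p ∈ antidiagonal n, ∑ t ∈ antidiagonalTuple k p.2, g (Fin.cons p.1 t) := by
  simp only [sum_eq_multiset_sum]
  change (Multiset.map g
      (List.Nat.antidiagonalTuple (k + 1) n : Multiset (Fin (k + 1) → ℕ))).sum =
    (Multiset.map _ (List.Nat.antidiagonal n : Multiset (ℕ × ℕ))).sum
  simp only [List.Nat.antidiagonalTuple, List.flatMap, Multiset.map_coe, List.map_flatten,
    List.map_map, Function.comp_def, Multiset.sum_coe, List.sum_flatten, antidiagonalTuple,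
    Multiset.Nat.antidiagonalTuple]

theorem sum_antidiagonal_antidiagonal {M : Type*} [AddCommMonoid M] (n : ℕ)
    (g : ℕ → ℕ → ℕ → M) :
    ∑ p ∈ antidiagonal n, ∑ q ∈ antidiagonal p.2, g p.1 q.1 q.2 =
      ∑ p ∈ antidiagonal n, ∑ q ∈ antidiagonal p.1, g q.1 q.2 p.2 := by
  rw [sum_sigma', sum_sigma']
  refine sum_nbij' (fun x => ⟨(x.1.1 + x.2.1, x.2.2), (x.1.1, x.2.1)⟩)
    (fun x => ⟨(x.2.1, x.2.2 + x.1.2), (x.2.2, x.1.2)⟩) ?_ ?_ ?_ ?_ ?_ <;>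
    simp only [mem_sigma, HasAntidiagonal.mem_antidiagonal, and_true] <;>
    rintro ⟨⟨a, b⟩, c, d⟩ ⟨h₁, h₂⟩ <;> dsimp only at h₁ h₂ ⊢
  · omega
  · omega
  · rw [h₂]
  · rw [h₂]

end Finset.Nat

open Finset.Nat

section HigherEuler

variable {R : Type*} [CommSemiring R]

/-- For the Euler numbers `E`, `higherEuler E r n` is the Euler number `E_n^{(r)}` of order `r`
and `higherEulerPoly E r n` the Euler polynomial `E_n^{(r)}(x) = ∑ₘ (n choose m) E_m^{(r)} x^{n-m}`.
-/
def higherEuler (E : ℕ → R) (r n : ℕ) : R :=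
  ∑ i ∈ antidiagonalTuple r n, (Nat.multinomial univ i : R) * ∏ j : Fin r, E (i j)

def higherEulerPoly (E : ℕ → R) (r n : ℕ) (x : R) : R :=
  ∑ p ∈ antidiagonal n, (n.choose p.1 : R) * higherEuler E r p.1 * x ^ p.2

theorem higherEuler_zero (E : ℕ → R) (n : ℕ) :
    higherEuler E 0 n = if n = 0 then 1 else 0 := by
  cases n <;> simp [higherEuler]

theorem higherEuler_succ (E : ℕ → R) (r n : ℕ) :
    higherEuler E (r + 1) n =
      ∑ p ∈ antidiagonal n, (n.choose p.1 : R) * higherEuler E r p.1 * E p.2 := by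
  rw [higherEuler, sum_antidiagonalTuple_succ, ← sum_antidiagonal_swap]
  refine sum_congr rfl fun p hp => ?_
  rw [HasAntidiagonal.mem_antidiagonal] at hp
  rw [higherEuler, mul_sum, sum_mul]
  refine sum_congr rfl fun t ht => ?_
  rw [mem_antidiagonalTuple] at ht
  simp only [Nat.multinomial_univ_fin_cons, ht, Fin.prod_univ_succ, Prod.fst_swap,
    Fin.cons_zero, Fin.cons_succ]
  rw [add_comm, hp, ← Nat.choose_symm_of_eq_add hp.symm]
  push_cast
  ring

theorem higherEulerPoly_zero (E : ℕ → R) (n : ℕ) (x : R) :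
    higherEulerPoly E 0 n x = x ^ n := by
  simp [higherEulerPoly, higherEuler_zero, sum_antidiagonal_eq_sum_range_succ_mk]

theorem higherEulerPoly_apply_zero (E : ℕ → R) (r n : ℕ) :
    higherEulerPoly E r n 0 = higherEuler E r n := by
  rw [higherEulerPoly, sum_antidiagonal_eq_sum_range_succ_mk, sum_range_succ, sum_eq_zero]
  · simp
  · intro k hk
    rw [mem_range] at hk
    simp [zero_pow (Nat.sub_ne_zero_of_lt hk)]

theorem higherEulerPoly_succ (E : ℕ → R) (r n : ℕ) (x : R) :
    higherEulerPoly E (r + 1) n x = ∑ p ∈ antidiagonal n, (n.choose p.1 : R) *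
      higherEuler E r p.1 * ∑ q ∈ antidiagonal p.2, (p.2.choose q.1 : R) * E q.1 * x ^ q.2 := by
  let g a b c : R :=
    ((a + b + c).choose a * (b + c).choose b : ℕ) * higherEuler E r a * E b * x ^ c
  calc higherEulerPoly E (r + 1) n x
      = ∑ p ∈ antidiagonal n, ∑ q ∈ antidiagonal p.1, g q.1 q.2 p.2 := by
        refine sum_congr rfl fun p hp => ?_
        rw [higherEuler_succ, mul_sum, sum_mul]
        refine sum_congr rfl fun q hq => ?_
        rcases p with ⟨m, c⟩
        rcases q with ⟨a, b⟩
        rw [HasAntidiagonal.mem_antidiagonal] at hp hq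
        dsimp only at hp hq ⊢
        subst hq hp
        have hchoose := Nat.choose_mul (n := a + b + c) (Nat.le_add_right a b)
        rw [show a + b + c - a = b + c by omega, Nat.add_sub_cancel_left] at hchoose
        simp only [g, ← hchoose]
        push_cast
        ring
    _ = ∑ p ∈ antidiagonal n, ∑ q ∈ antidiagonal p.2, g p.1 q.1 q.2 :=
        (sum_antidiagonal_antidiagonal n g).symm
    _ = _ := by
        refine sum_congr rfl fun p hp => ?_
        rw [mul_sum]
        refine sum_congr rfl fun q hq => ?_
        rcases p with ⟨a, m⟩
        rcases q with ⟨b, c⟩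
        rw [HasAntidiagonal.mem_antidiagonal] at hp hq
        dsimp only at hp hq ⊢
        subst hq hp
        simp only [g, add_assoc]
        push_cast
        ring

end HigherEuler

section FermionicSum

variable {R : Type*}

def IsEulerSequence [Semiring R] (E : ℕ → R) : Prop :=
  E 0 = 1 ∧ ∀ m, 1 ≤ m → ∑ k ∈ range (m + 1), (m.choose k : R) * E k + E m = 0

/-- `fermionicSum (p ^ N) g` is the partial sum `S_N(g)` of the fermionic integral. -/
def fermionicSum [Ring R] (M : ℕ) (g : R → R) : R :=
  ∑ u ∈ range M, (-1) ^ u * g u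

variable [CommRing R]

theorem fermionicSum_sum_mul {ι : Type*} (M : ℕ) (s : Finset ι) (c : ι → R)
    (g : ι → R → R) :
    fermionicSum M (fun y => ∑ i ∈ s, c i * g i y) = ∑ i ∈ s, c i * fermionicSum M (g i) := by
  simp only [fermionicSum, mul_sum]
  rw [sum_comm]
  exact sum_congr rfl fun i _ => sum_congr rfl fun u _ => mul_left_comm _ _ _

theorem fermionicSum_one_of_odd {M : ℕ} (hM : Odd M) : fermionicSum M (fun _ : R => 1) = 1 := by
  simp [fermionicSum, neg_one_geom_sum, Nat.not_even_iff_odd.mpr hM]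

theorem two_mul_fermionicSum_pow_add {M m : ℕ} (hM : Odd M) (hm : m ≠ 0) :
    2 * fermionicSum M (fun y : R => y ^ m) +
      ∑ k ∈ range m, (m.choose k : R) * fermionicSum M (fun y => y ^ k) = (M : R) ^ m := by
  have hstep (u : ℕ) : (-1 : R) ^ u * ((u + 1 : R) ^ m + (u : R) ^ m) = 2 * ((-1) ^ u * (u : R) ^ m)
      + ∑ k ∈ range m, (m.choose k : R) * ((-1) ^ u * (u : R) ^ k) := by
    have hexpand :
        ((u : R) + 1) ^ m = ∑ k ∈ range m, (m.choose k : R) * (u : R) ^ k + (u : R) ^ m := by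
      simp [add_pow, sum_range_succ, mul_comm]
    rw [hexpand]
    simp only [mul_add, mul_sum, mul_left_comm ((-1 : R) ^ u)]
    ring
  have htelescope :
      ∑ u ∈ range M, (-1 : R) ^ u * ((u + 1 : R) ^ m + (u : R) ^ m) = (M : R) ^ m := by
    have := sum_range_sub (fun u : ℕ => -(-1 : R) ^ u * (u : R) ^ m) M
    simpa [hM.neg_one_pow, zero_pow hm, pow_succ, mul_add] using this
  rw [← htelescope]
  simp only [fermionicSum, hstep, sum_add_distrib, mul_sum]
  exact congrArg _ sum_comm

end FermionicSum

section Padic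

variable {p : ℕ} [Fact p.Prime] {E : ℕ → ℚ_[p]}

theorem tendsto_fermionicSum_pow (hp : Odd p) (hE : IsEulerSequence E) (k : ℕ) :
    Tendsto (fun N => fermionicSum (p ^ N) fun y : ℚ_[p] => y ^ k) atTop (𝓝 (E k)) := by
  induction k using Nat.strong_induction_on with
  | _ m ih =>
  rcases Nat.eq_zero_or_pos m with rfl | hm
  · simp only [pow_zero, fermionicSum_one_of_odd hp.pow, hE.1]
    exact tendsto_const_nhds
  have hpow : Tendsto (fun N => ((p : ℚ_[p]) ^ N) ^ m) atTop (𝓝 0) := by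
    simpa [hm.ne'] using (tendsto_pow_atTop_nhds_zero_of_norm_lt_one Padic.norm_p_lt_one).pow m
  have hlim := (hpow.sub (tendsto_finsetSum (range m) fun k hk =>
    (ih k (mem_range.1 hk)).const_mul (m.choose k : ℚ_[p]))).div_const 2
  have hEm : (0 - ∑ k ∈ range m, (m.choose k : ℚ_[p]) * E k) / 2 = E m := by
    have := hE.2 m hm
    rw [sum_range_succ, Nat.choose_self, Nat.cast_one, one_mul] at this
    linear_combination -this / 2
  rw [hEm] at hlim
  refine hlim.congr fun N => ?_
  have := two_mul_fermionicSum_pow_add (R := ℚ_[p]) (hp.pow (n := N)) hm.ne'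
  push_cast at this
  linear_combination -this / 2

theorem tendsto_fermionicSum_add_pow (hp : Odd p) (hE : IsEulerSequence E)
    (k : ℕ) (x : ℚ_[p]) :
    Tendsto (fun N => fermionicSum (p ^ N) fun y => (x + y) ^ k) atTop
      (𝓝 (∑ q ∈ antidiagonal k, (k.choose q.1 : ℚ_[p]) * E q.1 * x ^ q.2)) := by
  have hexpand (y : ℚ_[p]) :
      (x + y) ^ k = ∑ q ∈ antidiagonal k, ((k.choose q.1 : ℚ_[p]) * x ^ q.2) * y ^ q.1 := by
    rw [add_comm, (Commute.all _ _).add_pow']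
    exact sum_congr rfl fun q _ => by rw [nsmul_eq_mul]; ring
  simp only [hexpand, fermionicSum_sum_mul]
  refine tendsto_finsetSum _ fun q _ => ?_
  convert (tendsto_fermionicSum_pow hp hE q.1).const_mul ((k.choose q.1 : ℚ_[p]) * x ^ q.2)
    using 2
  ring

theorem tendsto_fermionicSum_higherEulerPoly (hp : Odd p) (hE : IsEulerSequence E)
    (r n : ℕ) (x : ℚ_[p]) :
    Tendsto (fun N => fermionicSum (p ^ N) fun y => higherEulerPoly E r n (x + y)) atTop
      (𝓝 (higherEulerPoly E (r + 1) n x)) := by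
  rw [higherEulerPoly_succ]
  simp only [higherEulerPoly, fermionicSum_sum_mul]
  exact tendsto_finsetSum _ fun q _ => (tendsto_fermionicSum_add_pow hp hE q.2 x).const_mul _

end Padic

theorem iterated_fermionic_integral_eq_higher_eulerNumber_general (p : ℕ) [Fact p.Prime] (hp : Odd p)
    (E : ℕ → ℚ) (hE0 : E 0 = 1)
    (hE : ∀ n : ℕ, 1 ≤ n → (∑ k ∈ Finset.range (n + 1), (n.choose k : ℚ) * E k) + E n = 0)
    (n r : ℕ) (f : ℕ → ℚ_[p] → ℚ_[p])
    (hf0 : ∀ x : ℚ_[p], f 0 x = x ^ n)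
    (hf : ∀ j < r, ∀ x : ℚ_[p],
      Tendsto (fun N : ℕ => ∑ u ∈ Finset.range (p ^ N), (-1 : ℚ_[p]) ^ u * f j (x + (u : ℚ_[p])))
        atTop (nhds (f (j + 1) x))) :
    f r 0 = ∑ i ∈ Finset.Nat.antidiagonalTuple r n,
      (Nat.multinomial Finset.univ i : ℚ_[p]) * ∏ j : Fin r, ((E (i j) : ℚ) : ℚ_[p]) := by
  have hE' : IsEulerSequence fun k => (E k : ℚ_[p]) :=
    ⟨by simp [hE0], fun m hm => by simpa using congrArg ((↑) : ℚ → ℚ_[p]) (hE m hm)⟩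
  have hfj (j : ℕ) (hj : j ≤ r) : f j = higherEulerPoly (fun k => (E k : ℚ_[p])) j n := by
    induction j with
    | zero => exact funext fun x => by rw [hf0, higherEulerPoly_zero]
    | succ j ih =>
      funext x
      have hlim := hf j hj x
      rw [ih (by omega)] at hlim
      exact tendsto_nhds_unique hlim (tendsto_fermionicSum_higherEulerPoly hp hE' j n x)
  rw [hfj r le_rfl, higherEulerPoly_apply_zero, higherEuler]

/-- Let `E : ℕ → ℚ` be the Euler numbers, defined by `E 0 = 1` and, for
`n ≥ 1`, `∑_{k=0}^{n} (n choose k) E k + E n = 0`. Let `p` be an odd prime, `n : ℕ`,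
`r ≥ 1`, and suppose `f 0, f 1, …, f r : ℚ_[p] → ℚ_[p]` satisfy `f 0 x = x^n` and, for
each `j < r` and each `x`, the sequence `N ↦ ∑_{u=0}^{p^N-1} (-1)^u (f j) (x+u)` converges
to `(f (j+1)) x`; i.e. `f r` is the `r`-fold iterated fermionic `p`-adic integral of `x^n`.
Then `f r 0 = ∑_{i₁+⋯+i_r = n} (n choose i₁,…,i_r) E_{i₁} ⋯ E_{i_r} = E_n^{(r)}`, the
`n`-th Euler number of order `r`. -/
theorem iterated_fermionic_integral_eq_higher_eulerNumber (p : ℕ) [Fact p.Prime] (hp : Odd p)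
    (E : ℕ → ℚ) (hE0 : E 0 = 1)
    (hE : ∀ n : ℕ, 1 ≤ n → (∑ k ∈ Finset.range (n + 1), (n.choose k : ℚ) * E k) + E n = 0)
    (n r : ℕ) (hr : 1 ≤ r) (f : ℕ → ℚ_[p] → ℚ_[p])
    (hf0 : ∀ x : ℚ_[p], f 0 x = x ^ n)
    (hf : ∀ j < r, ∀ x : ℚ_[p],
      Tendsto (fun N : ℕ => ∑ u ∈ Finset.range (p ^ N), (-1 : ℚ_[p]) ^ u * f j (x + (u : ℚ_[p])))
        atTop (nhds (f (j + 1) x))) :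
    f r 0 = ∑ i ∈ Finset.Nat.antidiagonalTuple r n,
      (Nat.multinomial Finset.univ i : ℚ_[p]) * ∏ j : Fin r, ((E (i j) : ℚ) : ℚ_[p]) :=
  iterated_fermionic_integral_eq_higher_eulerNumber_general p hp E hE0 hE n r f hf0 hf
end
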